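/- arXiv:2401.07784 — 4 statements merged into one kernel-verified Lean document; each statement's English description precedes it below -/
import Mathlib

section
/- Let A, B, C, D be n×n matrices over a commutative ring such that C and D commute (CD = DC). Then the determinant of the 2n×2n block matrix [[A, B], [C, D]] equals det(A·D − B·C). -/
open Matrix Polynomial

private lemma block_det_mul {R : Type*} [CommRing R] {n : ℕ}
    (A B C D : Matrix (Fin n) (Fin n) R) (h : C * D = D * C) :
    (Matrix.fromBlocks A B C D).det * D.det = (A * D - B * C).det * D.det := by
  have key : Matrix.fromBlocks A B C D * Matrix.fromBlocks D 0 (-C) 1 =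
      Matrix.fromBlocks (A * D - B * C) B 0 D := by
    rw [Matrix.fromBlocks_multiply]
    congr 1 <;> simp [h, sub_eq_add_neg, Matrix.mul_neg]
  have := congrArg Matrix.det key
  rw [Matrix.det_mul, Matrix.det_fromBlocks_zero₁₂, Matrix.det_fromBlocks_zero₂₁,
    Matrix.det_one, mul_one] at this
  rw [← this]

theorem block_det_of_comm {R : Type*} [CommRing R] {n : ℕ}
    (A B C D : Matrix (Fin n) (Fin n) R) (h : C * D = D * C) :
    (Matrix.fromBlocks A B C D).det = (A * D - B * C).det := by
  -- pass to R[X], replace D by D + X•1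
  let f : R →+* R[X] := Polynomial.C
  let A' := A.map f
  let B' := B.map f
  let C' := C.map f
  let D' := D.map f + (X : R[X]) • (1 : Matrix (Fin n) (Fin n) R[X])
  have hcomm : C' * D' = D' * C' := by
    simp only [C', D', Matrix.mul_add, Matrix.add_mul, Matrix.mul_smul, Matrix.smul_mul,
      Matrix.mul_one, Matrix.one_mul, ← Matrix.map_mul, h]
  have key := block_det_mul A' B' C' D' hcomm
  have hmonic : D'.det.Monic := by
    have hD' : D' = Matrix.charmatrix (-D) := by
      ext i j
      by_cases hij : i = j <;>
        simp [D', f, Matrix.charmatrix_apply, Matrix.one_apply, hij, sub_neg_eq_add, add_comm,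
          Matrix.map_apply]
    rw [show D'.det = (-D).charpoly from by rw [Matrix.charpoly, hD']]
    exact Matrix.charpoly_monic _
  have key2 : (Matrix.fromBlocks A' B' C' D').det = (A' * D' - B' * C').det :=
    hmonic.isRegular.right key
  -- evaluate at 0
  have := congrArg (Polynomial.evalRingHom (0 : R)) key2
  rw [RingHom.map_det, RingHom.map_det] at this
  simp only [RingHom.mapMatrix_apply] at this
  have hA : A'.map (Polynomial.evalRingHom (0 : R)) = A := by
    ext i j; simp [A', f]
  have hB : B'.map (Polynomial.evalRingHom (0 : R)) = B := by
    ext i j; simp [B', f]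
  have hC : C'.map (Polynomial.evalRingHom (0 : R)) = C := by
    ext i j; simp [C', f]
  have hD : D'.map (Polynomial.evalRingHom (0 : R)) = D := by
    ext i j; by_cases hij : i = j <;> simp [D', f, Matrix.one_apply, hij]
  rw [show (Matrix.fromBlocks A' B' C' D').map (Polynomial.evalRingHom (0 : R)) =
      Matrix.fromBlocks A B C D from by rw [Matrix.fromBlocks_map, hA, hB, hC, hD],
    show (A' * D' - B' * C').map (Polynomial.evalRingHom (0 : R)) = A * D - B * C from by
      rw [Matrix.map_sub _ (fun a b => map_sub _ a b), Matrix.map_mul, Matrix.map_mul,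
        hA, hB, hC, hD]] at this
  exact this
end

section
/- Let φ̂, φ, δ₁, δ₂ ∈ ℝ³ with ‖φ̂‖ = 1, ‖δ₁‖ ≤ ξ, ‖δ₂‖ ≤ ξ, φ = −φ̂ + δ₂ and ‖φ‖ = 1, and suppose φ̂ᵀδ₁ = −‖δ₁‖²/2. Then for every unit vector v ∈ ℝ³, ‖(δ₁ φᵀ + φ̂ δ₂ᵀ) v‖² ≤ 2ξ² + ξ³. -/
theorem noise_block_norm_bound (ξ : ℝ) (φhat φ δ1 δ2 : EuclideanSpace ℝ (Fin 3))
    (hφhat : ‖φhat‖ = 1) (hφ : ‖φ‖ = 1)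
    (hδ1 : ‖δ1‖ ≤ ξ) (hδ2 : ‖δ2‖ ≤ ξ)
    (hrel : φ = -φhat + δ2)
    (hdot : (inner ℝ φhat δ1 : ℝ) = -‖δ1‖ ^ 2 / 2) :
    ∀ v : EuclideanSpace ℝ (Fin 3), ‖v‖ = 1 →
      ‖(inner ℝ φ v : ℝ) • δ1 + (inner ℝ δ2 v : ℝ) • φhat‖ ^ 2 ≤ 2 * ξ ^ 2 + ξ ^ 3 := by
  intro v hv
  set a := (inner ℝ φ v : ℝ) with ha'
  set b := (inner ℝ δ2 v : ℝ) with hb'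
  have ha : |a| ≤ 1 := by
    calc |a| ≤ ‖φ‖ * ‖v‖ := abs_real_inner_le_norm φ v
    _ = 1 := by rw [hφ, hv]; ring
  have hb : |b| ≤ ξ := by
    calc |b| ≤ ‖δ2‖ * ‖v‖ := abs_real_inner_le_norm δ2 v
    _ ≤ ξ := by rw [hv, mul_one]; exact hδ2
  have hξ0 : 0 ≤ ξ := le_trans (norm_nonneg δ1) hδ1
  have hdot' : (inner ℝ δ1 φhat : ℝ) = -‖δ1‖ ^ 2 / 2 := by
    rw [real_inner_comm]; exact hdot
  have hexp : ‖a • δ1 + b • φhat‖ ^ 2 = a^2 * ‖δ1‖^2 - a*b*‖δ1‖^2 + b^2 := by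
    rw [norm_add_sq_real, real_inner_smul_left, real_inner_smul_right,
      norm_smul, norm_smul, hdot', hφhat]
    simp only [Real.norm_eq_abs]
    rw [mul_pow, mul_pow, sq_abs a, sq_abs b]
    ring
  rw [hexp]
  have ha2 : a^2 ≤ 1 := by nlinarith [sq_abs a, abs_nonneg a]
  have hd2 : ‖δ1‖^2 ≤ ξ^2 := by nlinarith [norm_nonneg δ1]
  have h1 : a^2 * ‖δ1‖^2 ≤ ξ^2 := by nlinarith [sq_nonneg a, sq_nonneg ξ]
  have h3 : b^2 ≤ ξ^2 := by nlinarith [sq_abs b, abs_nonneg b]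
  have hab : -(a*b) ≤ ξ := by
    have h4 : |a*b| ≤ ξ := by
      rw [abs_mul]
      calc |a| * |b| ≤ 1 * ξ := mul_le_mul ha hb (abs_nonneg b) zero_le_one
      _ = ξ := one_mul ξ
    linarith [neg_abs_le (a*b)]
  have h2 : -(a*b) * ‖δ1‖^2 ≤ ξ^3 := by nlinarith [sq_nonneg (‖δ1‖), sq_nonneg ξ, abs_nonneg (a*b), neg_abs_le (a*b)]
  linarith
end

section
/- Let M ∈ ℝ^{3N×3N} be symmetric with 3×3 blocks M_{ij}, let Θ* = [R₁*, …, R_N*] ∈ ℝ^{3×3N} with each R_i* ∈ O(3), and define Λ* as the block-diagonal matrix with blocks Λ_i* = ∑_{j=1}^N M_{ij} (R_j*)ᵀ R_i*. If each Λ_i* is symmetric and M − Λ* ⪰ 0, then for every Θ = [R₁, …, R_N] with all R_i ∈ O(3) (or SO(3)), Tr(Θ M Θᵀ) ≥ Tr(Θ* M (Θ*)ᵀ); i.e., Θ* is a global minimizer of Tr(Θ M Θᵀ) over products of orthogonal matrices. -/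
open Matrix

/-!
For every `Θ = [R₁ … R_N]` with orthogonal blocks and every block-diagonal `Λ`,
`Tr(Θ Λ Θᵀ) = ∑ Tr Λᵢ` by cyclicity of the trace. The definition of `Λ*` makes
`Tr(Θ* M Θ*ᵀ) = ∑ᵢⱼ Tr(Mᵢⱼ Rⱼ*ᵀ Rᵢ*) = ∑ Tr Λᵢ*` as well, so
`Tr(Θ M Θᵀ) - Tr(Θ* M Θ*ᵀ) = Tr(Θ (M - Λ*) Θᵀ) ≥ 0`.
-/

/-- Horizontal concatenation `[R₁ … R_N] ∈ ℝ^{3×3N}` of `N` matrices `3×3`. -/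
noncomputable def hcat {N : ℕ} (R : Fin N → Matrix (Fin 3) (Fin 3) ℝ) :
    Matrix (Fin 3) (Fin N × Fin 3) ℝ :=
  Matrix.of fun a p => R p.1 a p.2

theorem hcat_mul_mul_transpose_hcat {N : ℕ} (R : Fin N → Matrix (Fin 3) (Fin 3) ℝ)
    (A : Matrix (Fin N × Fin 3) (Fin N × Fin 3) ℝ)
    (Ab : Fin N → Fin N → Matrix (Fin 3) (Fin 3) ℝ)
    (hA : ∀ i j a b, A (i, a) (j, b) = Ab i j a b) :
    hcat R * A * (hcat R)ᵀ = ∑ i, ∑ j, R i * Ab i j * (R j)ᵀ := by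
  ext c d
  simp only [mul_apply, Matrix.sum_apply, transpose_apply, Fintype.sum_prod_type, hcat, of_apply,
    hA, Finset.sum_mul]
  exact (Finset.sum_congr rfl fun _ _ => Finset.sum_comm).trans Finset.sum_comm

theorem trace_hcat_mul_blockDiagonal_mul_transpose_hcat {N : ℕ}
    (R : Fin N → Matrix (Fin 3) (Fin 3) ℝ) (hR : ∀ i, (R i)ᵀ * R i = 1)
    (Λ : Fin N → Matrix (Fin 3) (Fin 3) ℝ) (Λmat : Matrix (Fin N × Fin 3) (Fin N × Fin 3) ℝ)
    (hΛmat : ∀ i j a b, Λmat (i, a) (j, b) = if i = j then Λ i a b else 0) :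
    (hcat R * Λmat * (hcat R)ᵀ).trace = ∑ i, (Λ i).trace := by
  rw [hcat_mul_mul_transpose_hcat R Λmat (fun i j => if i = j then Λ i else 0)
    fun i j a b => by rw [hΛmat]; split_ifs <;> rfl]
  simp only [mul_ite, ite_mul, mul_zero, zero_mul, Finset.sum_ite_eq, Finset.mem_univ, if_true,
    trace_sum]
  refine Finset.sum_congr rfl fun i _ => ?_
  rw [trace_mul_cycle, hR, Matrix.one_mul]

theorem trace_hcat_mul_mul_transpose_hcat_eq_sum_trace {N : ℕ}
    (R : Fin N → Matrix (Fin 3) (Fin 3) ℝ) (Mb : Fin N → Fin N → Matrix (Fin 3) (Fin 3) ℝ)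
    (M : Matrix (Fin N × Fin 3) (Fin N × Fin 3) ℝ)
    (hMb : ∀ i j a b, M (i, a) (j, b) = Mb i j a b) (Λ : Fin N → Matrix (Fin 3) (Fin 3) ℝ)
    (hΛ : ∀ i, Λ i = ∑ j, Mb i j * (R j)ᵀ * R i) :
    (hcat R * M * (hcat R)ᵀ).trace = ∑ i, (Λ i).trace := by
  rw [hcat_mul_mul_transpose_hcat R M Mb hMb, trace_sum]
  refine Finset.sum_congr rfl fun i _ => ?_
  rw [hΛ, trace_sum, trace_sum]
  exact Finset.sum_congr rfl fun j _ => (trace_mul_cycle _ _ _).symm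

theorem global_optimality_certificate_general (N : ℕ)
    (Mb : Fin N → Fin N → Matrix (Fin 3) (Fin 3) ℝ)
    (M : Matrix (Fin N × Fin 3) (Fin N × Fin 3) ℝ)
    (hMb : ∀ i j a b, M (i, a) (j, b) = Mb i j a b)
    (Rstar : Fin N → Matrix (Fin 3) (Fin 3) ℝ)
    (Λ : Fin N → Matrix (Fin 3) (Fin 3) ℝ)
    (hΛ : ∀ i, Λ i = ∑ j, Mb i j * (Rstar j)ᵀ * Rstar i)
    (Λmat : Matrix (Fin N × Fin 3) (Fin N × Fin 3) ℝ)
    (hΛmat : ∀ i j a b, Λmat (i, a) (j, b) = if i = j then Λ i a b else 0)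
    (hPSD : (M - Λmat).PosSemidef) :
    ∀ R : Fin N → Matrix (Fin 3) (Fin 3) ℝ, (∀ i, (R i)ᵀ * R i = 1) →
      (hcat Rstar * M * (hcat Rstar)ᵀ).trace ≤ (hcat R * M * (hcat R)ᵀ).trace := by
  intro R hR
  have hstar : (hcat Rstar * M * (hcat Rstar)ᵀ).trace = ∑ i, (Λ i).trace :=
    trace_hcat_mul_mul_transpose_hcat_eq_sum_trace Rstar Mb M hMb Λ hΛ
  have hΛR : (hcat R * Λmat * (hcat R)ᵀ).trace = ∑ i, (Λ i).trace :=
    trace_hcat_mul_blockDiagonal_mul_transpose_hcat R hR Λ Λmat hΛmat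
  have hgap : 0 ≤ (hcat R * (M - Λmat) * (hcat R)ᵀ).trace := by
    simpa using (hPSD.mul_mul_conjTranspose_same (hcat R)).trace_nonneg
  rw [Matrix.mul_sub, Matrix.sub_mul, trace_sub, hΛR] at hgap
  linarith

theorem global_optimality_certificate (N : ℕ)
    (Mb : Fin N → Fin N → Matrix (Fin 3) (Fin 3) ℝ)
    (M : Matrix (Fin N × Fin 3) (Fin N × Fin 3) ℝ)
    (hMb : ∀ i j a b, M (i, a) (j, b) = Mb i j a b)
    (hM : M.IsHermitian)
    (Rstar : Fin N → Matrix (Fin 3) (Fin 3) ℝ)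
    (hRstar : ∀ i, (Rstar i)ᵀ * Rstar i = 1)
    (Λ : Fin N → Matrix (Fin 3) (Fin 3) ℝ)
    (hΛ : ∀ i, Λ i = ∑ j, Mb i j * (Rstar j)ᵀ * Rstar i)
    (hΛsym : ∀ i, (Λ i).IsSymm)
    (Λmat : Matrix (Fin N × Fin 3) (Fin N × Fin 3) ℝ)
    (hΛmat : ∀ i j a b, Λmat (i, a) (j, b) = if i = j then Λ i a b else 0)
    (hPSD : (M - Λmat).PosSemidef) :
    ∀ R : Fin N → Matrix (Fin 3) (Fin 3) ℝ, (∀ i, (R i)ᵀ * R i = 1) →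
      (hcat Rstar * M * (hcat Rstar)ᵀ).trace ≤ (hcat R * M * (hcat R)ᵀ).trace :=
  global_optimality_certificate_general N Mb M hMb Rstar Λ hΛ Λmat hΛmat hPSD
end

section
/- Let J ∈ ℝ^{(3+L)×3N} be a matrix whose first 3 rows are √μ·(1_Nᵀ ⊗ I₃) and whose remaining rows are vectors v_sᵀ, where each v_s has a vector φ_s in 3-block i_s, −φ_s in 3-block j_s, and zeros elsewhere. Suppose there exists a nonzero ζ ∈ ℝ³ and a nonempty subset V_c ⊆ {1,…,N} containing an index a such that: (i) ζᵀφ_s = 0 for every s with {i_s, j_s} ⊆ V_c, and (ii) every s with a ∈ {i_s, j_s} satisfies {i_s, j_s} ⊆ V_c. Then the nonzero vector w = [k₁ζ; k₂ζ; …; k_Nζ] with k_a = −(N−1) and k_i = 1 for i ≠ a satisfies Jw = 0; hence rank(J) < 3N and det(JᵀJ) = 0. -/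
/-! On a vector of the form `w = k ⊗ ζ`, a measurement row (with `φ_s` in block `i_s` and `-φ_s`
in block `j_s`) evaluates to `(k_{i_s} - k_{j_s}) ζᵀφ_s`. With `k = 1` off `a` this vanishes for
measurements avoiding `a`, and for those touching `a` both endpoints lie in `V_c`, where `ζ ⊥ φ_s`.
The centroid rows give `√μ (∑ k) ζ`, which vanishes because the weight at `a` balances the others.
A nonzero kernel vector then forces `rank J < 3N` and `det (JᵀJ) = 0`. -/

open Matrix

section KroneckerWeight

variable {R ι m : Type*} [Fintype ι] [Fintype m]

theorem sum_incidence_mul_kronecker [CommRing R] [DecidableEq ι] {p q : ι} (hpq : p ≠ q)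
    (φ ζ : m → R) (k : ι → R) :
    ∑ x : ι × m, (if x.1 = p then φ x.2 else if x.1 = q then -φ x.2 else 0) * (k x.1 * ζ x.2)
      = (k p - k q) * (ζ ⬝ᵥ φ) := by
  have hsplit : ∀ x : ι × m, (if x.1 = p then φ x.2 else if x.1 = q then -φ x.2 else 0)
      = (if x.1 = p then φ x.2 else 0) - (if x.1 = q then φ x.2 else 0) := by
    rintro ⟨i, c⟩
    by_cases hp : i = p
    · subst hp; simp [hpq]
    · by_cases hq : i = q
      · subst hq; simp [hp]
      · simp [hp, hq]
  simp only [hsplit, sub_mul, Finset.sum_sub_distrib, Fintype.sum_prod_type, ite_mul, zero_mul,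
    Finset.sum_ite_irrel, Finset.sum_const_zero, Finset.sum_ite_eq', Finset.mem_univ, if_true,
    dotProduct, Finset.mul_sum]
  simp only [mul_comm, mul_left_comm]

theorem sum_coord_mul_kronecker [CommSemiring R] [DecidableEq m] (c : R) (r : m) (k : ι → R)
    (ζ : m → R) :
    ∑ x : ι × m, (c * if r = x.2 then 1 else 0) * (k x.1 * ζ x.2) = c * (∑ i, k i) * ζ r := by
  simp only [Fintype.sum_prod_type, mul_ite, mul_one, mul_zero, ite_mul, zero_mul,
    Finset.sum_ite_eq, Finset.mem_univ, if_true, Finset.mul_sum, Finset.sum_mul, mul_assoc]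

theorem sum_ite_eq_neg_card_sub_one [CommRing R] [DecidableEq ι] (a : ι) :
    ∑ i : ι, (if i = a then -((Fintype.card ι : R) - 1) else 1) = 0 := by
  have hsplit : ∀ i : ι, (if i = a then -((Fintype.card ι : R) - 1) else 1)
      = 1 - if i = a then (Fintype.card ι : R) else 0 := by
    intro i; split_ifs <;> ring
  simp only [hsplit, Finset.sum_sub_distrib, Finset.sum_ite_eq', Finset.mem_univ, if_true,
    Finset.sum_const, Finset.card_univ, nsmul_eq_mul, mul_one, sub_self]

end KroneckerWeight

theorem Matrix.rank_lt_card_width_of_mulVec_eq_zero {K m n : Type*} [Field K] [Fintype m]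
    [Fintype n] (A : Matrix m n K) {w : n → K} (hw : w ≠ 0) (hAw : A *ᵥ w = 0) :
    A.rank < Fintype.card n := by
  have hker : 0 < Module.finrank K (LinearMap.ker A.mulVecLin) :=
    Module.finrank_pos_iff_exists_ne_zero.2 ⟨⟨w, hAw⟩, fun h => hw (congrArg Subtype.val h)⟩
  have hrank_nullity := LinearMap.finrank_range_add_finrank_ker A.mulVecLin
  rw [Module.finrank_fintype_fun_eq_card] at hrank_nullity
  rw [Matrix.rank]
  omega

theorem Matrix.det_transpose_mul_self_eq_zero_of_mulVec_eq_zero {R m n : Type*} [CommRing R]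
    [IsDomain R] [Fintype m] [Fintype n] [DecidableEq n] (A : Matrix m n R) {w : n → R}
    (hw : w ≠ 0) (hAw : A *ᵥ w = 0) :
    (Aᵀ * A).det = 0 :=
  Matrix.exists_mulVec_eq_zero_iff.1 ⟨w, hw, by rw [← mulVec_mulVec, hAw, mulVec_zero]⟩

theorem degeneration_identification_general (N L : ℕ) (hN : 2 ≤ N)
    (μ : ℝ)
    (is js : Fin L → Fin N) (hdist : ∀ s, is s ≠ js s)
    (φ : Fin L → Fin 3 → ℝ)
    (v : Fin L → Fin N × Fin 3 → ℝ)
    (hv : ∀ s p, v s p =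
      if p.1 = is s then φ s p.2 else if p.1 = js s then -(φ s p.2) else 0)
    (J : Matrix (Fin 3 ⊕ Fin L) (Fin N × Fin 3) ℝ)
    (hJtop : ∀ a (p : Fin N × Fin 3),
      J (Sum.inl a) p = Real.sqrt μ * (if a = p.2 then 1 else 0))
    (hJbot : ∀ s p, J (Sum.inr s) p = v s p)
    (ζ : Fin 3 → ℝ) (hζ : ζ ≠ 0)
    (Vc : Finset (Fin N)) (a : Fin N)
    (hcop : ∀ s, is s ∈ Vc → js s ∈ Vc → ζ ⬝ᵥ φ s = 0)
    (hiso : ∀ s, (is s = a ∨ js s = a) → is s ∈ Vc ∧ js s ∈ Vc) :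
    let w : Fin N × Fin 3 → ℝ :=
      fun p => (if p.1 = a then -((N : ℝ) - 1) else 1) * ζ p.2
    w ≠ 0 ∧ J.mulVec w = 0 ∧ J.rank < 3 * N ∧ (Jᵀ * J).det = 0 := by
  intro w
  set k : Fin N → ℝ := fun i => if i = a then -((N : ℝ) - 1) else 1
  have hw_def : w = fun p => k p.1 * ζ p.2 := rfl
  have hw : w ≠ 0 := by
    obtain ⟨r, hr⟩ := Function.ne_iff.1 hζ
    obtain ⟨b, hb⟩ := Fintype.exists_ne_of_one_lt_card (by simpa using (by omega : 1 < N)) a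
    exact Function.ne_iff.2 ⟨(b, r), by simpa [w, hb] using hr⟩
  have hJw : J *ᵥ w = 0 := by
    ext (r | s)
    · have hk : ∑ i, k i = 0 := by simpa [k] using sum_ite_eq_neg_card_sub_one (R := ℝ) a
      simp only [mulVec, dotProduct, hJtop, hw_def]
      rw [sum_coord_mul_kronecker, hk, mul_zero, zero_mul, Pi.zero_apply]
    · simp only [mulVec, dotProduct, hJbot, hv, hw_def]
      rw [sum_incidence_mul_kronecker (hdist s), Pi.zero_apply]
      by_cases hs : is s = a ∨ js s = a
      · rw [hcop s (hiso s hs).1 (hiso s hs).2, mul_zero]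
      · rw [not_or] at hs
        simp [k, hs.1, hs.2]
  refine ⟨hw, hJw, ?_, J.det_transpose_mul_self_eq_zero_of_mulVec_eq_zero hw hJw⟩
  simpa [mul_comm] using J.rank_lt_card_width_of_mulVec_eq_zero hw hJw

theorem degeneration_identification (N L : ℕ) (hN : 2 ≤ N)
    (μ : ℝ) (hμ : 0 < μ)
    (is js : Fin L → Fin N) (hdist : ∀ s, is s ≠ js s)
    (φ : Fin L → Fin 3 → ℝ)
    (v : Fin L → Fin N × Fin 3 → ℝ)
    (hv : ∀ s p, v s p =
      if p.1 = is s then φ s p.2 else if p.1 = js s then -(φ s p.2) else 0)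
    (J : Matrix (Fin 3 ⊕ Fin L) (Fin N × Fin 3) ℝ)
    (hJtop : ∀ a (p : Fin N × Fin 3),
      J (Sum.inl a) p = Real.sqrt μ * (if a = p.2 then 1 else 0))
    (hJbot : ∀ s p, J (Sum.inr s) p = v s p)
    (ζ : Fin 3 → ℝ) (hζ : ζ ≠ 0)
    (Vc : Finset (Fin N)) (a : Fin N) (ha : a ∈ Vc)
    (hcop : ∀ s, is s ∈ Vc → js s ∈ Vc → ζ ⬝ᵥ φ s = 0)
    (hiso : ∀ s, (is s = a ∨ js s = a) → is s ∈ Vc ∧ js s ∈ Vc) :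
    let w : Fin N × Fin 3 → ℝ :=
      fun p => (if p.1 = a then -((N : ℝ) - 1) else 1) * ζ p.2
    w ≠ 0 ∧ J.mulVec w = 0 ∧ J.rank < 3 * N ∧ (Jᵀ * J).det = 0 :=
  degeneration_identification_general N L hN μ is js hdist φ v hv J hJtop hJbot ζ hζ Vc a hcop hiso
end
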